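/- arXiv:2507.06032 — 2 statements merged into one kernel-verified Lean document; each statement's English description precedes it below -/
import Mathlib

section
/- For every abstract online covering problem that is (α, γ)-decomposable (α ≥ 1, γ ≥ 1) and every nonempty finite request set X̂, there exist an integer r ≥ 1, pairwise disjoint nonempty sets X_1, …, X_r with X_1 ∪ … ∪ X_r = X̂, and finite solution sets T_1, …, T_r with Feas X_i T_i for each i, such that, writing R_i := X̂ \ (X_1 ∪ … ∪ X_i) (so R_0 = X̂) and g := g_{α,γ}(|X̂|): (A) |X_i| ≥ |R_{i−1}|/2 for every 1 ≤ i ≤ r; (B) for every 2 ≤ i ≤ r−1, if c(T_i) < 2·c(T_{i−1}) then 8·c(T_{i−1}) < c(T_{i+1}); (C) for every 2 ≤ i ≤ r, if c(T_i) > 10·c(T_{i−1}) then c(T_i) ≤ g · m_{⌈|R_{i−1}|/2⌉}(R_{i−1}); (D) for every 2 ≤ i ≤ r, c(T_i) ≤ g · m_{|X_i|}(R_{i−1}), and moreover c(T_1) ≤ g · m_{⌈|X̂|/2⌉}(X̂). -/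
open Finset

/-- An abstract online covering problem. -/
structure CoveringProblem (X S : Type) [DecidableEq X] [Fintype S] [DecidableEq S] where
  cost : S → ℝ
  cost_nonneg : ∀ s, 0 ≤ cost s
  Feas : Finset X → Finset S → Prop
  feas_union : ∀ A₁ T₁ A₂ T₂, Feas A₁ T₁ → Feas A₂ T₂ → Feas (A₁ ∪ A₂) (T₁ ∪ T₂)
  feas_mono : ∀ A T A' T', Feas A T → A' ⊆ A → T ⊆ T' → Feas A' T'
  feas_univ : ∀ A, Feas A Finset.univ

variable {X S : Type} [DecidableEq X] [Fintype S] [DecidableEq S]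

/-- Cost of a finite set of solution items. -/
def CoveringProblem.setCost (P : CoveringProblem X S) (T : Finset S) : ℝ :=
  ∑ s ∈ T, P.cost s

/-- Cost of a cheapest feasible solution for a finite request set. -/
noncomputable def CoveringProblem.optCost (P : CoveringProblem X S) (A : Finset X) : ℝ :=
  sInf {r : ℝ | ∃ T : Finset S, P.Feas A T ∧ r = P.setCost T}

/-- A deterministic online algorithm: prefix-monotone (irrevocable purchases) and feasible. -/
def CoveringProblem.IsOnlineAlg (P : CoveringProblem X S) (ALG : List X → Finset S) : Prop :=
  (∀ (σ : List X) (x : X), ALG σ ⊆ ALG (σ ++ [x])) ∧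
  ∀ σ : List X, P.Feas σ.toFinset (ALG σ)

/-- ρ-competitiveness on duplicate-free request sequences. -/
def CoveringProblem.IsCompetitive (P : CoveringProblem X S) (ρ : ℕ → ℝ)
    (ALG : List X → Finset S) : Prop :=
  ∀ σ : List X, σ.Nodup → P.setCost (ALG σ) ≤ ρ σ.length * P.optCost σ.toFinset

/-- The prediction error η(σ) = min(|Xσ|, |Xσ \ X̂| + |X̂ \ Xσ|). -/
def predErr (Xhat : Finset X) (σ : List X) : ℕ :=
  min σ.toFinset.card ((σ.toFinset \ Xhat).card + (Xhat \ σ.toFinset).card)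


/-- `m_j(R)`: minimum of `opt(A)` over subsets `A ⊆ R` of cardinality `j`. -/
noncomputable def CoveringProblem.mCost (P : CoveringProblem X S) (R : Finset X) (j : ℕ) : ℝ :=
  sInf {r : ℝ | ∃ A : Finset X, A ⊆ R ∧ A.card = j ∧ r = P.optCost A}

/-- (α, γ)-decomposability. -/
def CoveringProblem.Decomposable (P : CoveringProblem X S) (α γ : ℝ) : Prop :=
  ∀ (R : Finset X) (i : ℕ), 1 ≤ i → i ≤ R.card →
    ∃ (B : Finset X) (T : Finset S), B ⊆ R ∧ (i : ℝ) / γ ≤ (B.card : ℝ) ∧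
      P.Feas B T ∧ P.setCost T ≤ α * P.mCost R i

/-- `g_{α,γ}(t)`. -/
noncomputable def gFun (α γ : ℝ) (t : ℕ) : ℝ :=
  if γ = 1 then α else α * (1 + Real.log t / Real.log (γ / (γ - 1)))

/-- Residual set `R_i := X̂ \ (X_1 ∪ … ∪ X_i)`. -/
def resSet (Xhat : Finset X) (Xs : ℕ → Finset X) (i : ℕ) : Finset X :=
  Xhat \ (Finset.Icc 1 i).biUnion Xs

namespace CoveringProblem

variable (P : CoveringProblem X S)

lemma setCost_nonneg (T : Finset S) : 0 ≤ P.setCost T :=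
  Finset.sum_nonneg fun s _ => P.cost_nonneg s

lemma setCost_union_le (T₁ T₂ : Finset S) :
    P.setCost (T₁ ∪ T₂) ≤ P.setCost T₁ + P.setCost T₂ := by
  classical
  have h1 : P.setCost (T₁ ∪ T₂) = P.setCost T₁ + P.setCost (T₂ \ T₁) := by
    rw [show T₁ ∪ T₂ = T₁ ∪ (T₂ \ T₁) by rw [Finset.union_sdiff_self_eq_union]]
    exact Finset.sum_union (Finset.disjoint_sdiff)
  have h2 : P.setCost (T₂ \ T₁) ≤ P.setCost T₂ :=
    Finset.sum_le_sum_of_subset_of_nonneg (Finset.sdiff_subset)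
      (fun s _ _ => P.cost_nonneg s)
  linarith

lemma optSet_finite (A : Finset X) :
    {r : ℝ | ∃ T : Finset S, P.Feas A T ∧ r = P.setCost T}.Finite := by
  have : {r : ℝ | ∃ T : Finset S, P.Feas A T ∧ r = P.setCost T}
      ⊆ Set.range P.setCost := by
    rintro r ⟨T, _, rfl⟩; exact ⟨T, rfl⟩
  exact (Set.finite_range _).subset this

lemma optSet_nonempty (A : Finset X) :
    {r : ℝ | ∃ T : Finset S, P.Feas A T ∧ r = P.setCost T}.Nonempty :=
  ⟨P.setCost Finset.univ, Finset.univ, P.feas_univ A, rfl⟩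

lemma optCost_attained (A : Finset X) :
    ∃ T : Finset S, P.Feas A T ∧ P.setCost T = P.optCost A := by
  have h := (P.optSet_nonempty A).csInf_mem (P.optSet_finite A)
  obtain ⟨T, hT, he⟩ := h
  exact ⟨T, hT, he.symm⟩

lemma optCost_le {A : Finset X} {T : Finset S} (h : P.Feas A T) :
    P.optCost A ≤ P.setCost T :=
  csInf_le ((P.optSet_finite A).bddBelow) ⟨T, h, rfl⟩

lemma optCost_nonneg (A : Finset X) : 0 ≤ P.optCost A := by
  apply Real.sInf_nonneg
  rintro r ⟨T, _, rfl⟩; exact P.setCost_nonneg T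

lemma optCost_mono {A' A : Finset X} (h : A' ⊆ A) : P.optCost A' ≤ P.optCost A := by
  obtain ⟨T, hT, hc⟩ := P.optCost_attained A
  calc P.optCost A' ≤ P.setCost T := P.optCost_le (P.feas_mono A T A' T hT h subset_rfl)
    _ = P.optCost A := hc

lemma optCost_union_le (A B : Finset X) :
    P.optCost (A ∪ B) ≤ P.optCost A + P.optCost B := by
  obtain ⟨T₁, h1, e1⟩ := P.optCost_attained A
  obtain ⟨T₂, h2, e2⟩ := P.optCost_attained B
  calc P.optCost (A ∪ B) ≤ P.setCost (T₁ ∪ T₂) :=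
        P.optCost_le (P.feas_union A T₁ B T₂ h1 h2)
    _ ≤ P.setCost T₁ + P.setCost T₂ := P.setCost_union_le T₁ T₂
    _ = P.optCost A + P.optCost B := by rw [e1, e2]

lemma mSet_finite (R : Finset X) (j : ℕ) :
    {r : ℝ | ∃ A : Finset X, A ⊆ R ∧ A.card = j ∧ r = P.optCost A}.Finite := by
  have : {r : ℝ | ∃ A : Finset X, A ⊆ R ∧ A.card = j ∧ r = P.optCost A}
      ⊆ P.optCost '' {A : Finset X | A ⊆ R} := by
    rintro r ⟨A, hA, _, rfl⟩; exact ⟨A, hA, rfl⟩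
  refine Set.Finite.subset (Set.Finite.image _ ?_) this
  have : {A : Finset X | A ⊆ R} ⊆ ↑R.powerset := by
    intro A hA; simpa [Finset.mem_powerset] using hA
  exact (R.powerset.finite_toSet).subset this

lemma mCost_nonneg (R : Finset X) (j : ℕ) : 0 ≤ P.mCost R j := by
  apply Real.sInf_nonneg
  rintro r ⟨A, _, _, rfl⟩; exact P.optCost_nonneg A

lemma mCost_le {R A : Finset X} (h : A ⊆ R) : P.mCost R A.card ≤ P.optCost A :=
  csInf_le ((P.mSet_finite R A.card).bddBelow) ⟨A, h, rfl, rfl⟩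

lemma mCost_attained {R : Finset X} {j : ℕ} (hj : j ≤ R.card) :
    ∃ A : Finset X, A ⊆ R ∧ A.card = j ∧ P.optCost A = P.mCost R j := by
  obtain ⟨A₀, hA₀, hc₀⟩ := Finset.exists_subset_card_eq hj
  have hne : {r : ℝ | ∃ A : Finset X, A ⊆ R ∧ A.card = j ∧ r = P.optCost A}.Nonempty :=
    ⟨P.optCost A₀, A₀, hA₀, hc₀, rfl⟩
  obtain ⟨A, h1, h2, h3⟩ := hne.csInf_mem (P.mSet_finite R j)
  exact ⟨A, h1, h2, h3.symm⟩

lemma mCost_mono {R : Finset X} {j j' : ℕ} (h : j ≤ j') (h' : j' ≤ R.card) :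
    P.mCost R j ≤ P.mCost R j' := by
  obtain ⟨A', hA'R, hA'c, hA'⟩ := P.mCost_attained h'
  obtain ⟨A, hAA', hAc⟩ := Finset.exists_subset_card_eq (show j ≤ A'.card by omega)
  calc P.mCost R j = P.mCost R A.card := by rw [hAc]
    _ ≤ P.optCost A := P.mCost_le (hAA'.trans hA'R)
    _ ≤ P.optCost A' := P.optCost_mono hAA'
    _ = P.mCost R j' := hA'

end CoveringProblem
lemma CoveringProblem.chooser (P : CoveringProblem X S) {R : Finset X} (hR : R.Nonempty)
    {cp : ℝ} (hcp : 0 ≤ cp) :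
    ∃ j : ℕ, (R.card + 1) / 2 ≤ j ∧ j ≤ R.card ∧
      (P.mCost R j ≤ 10 * cp ∨ j = (R.card + 1) / 2) ∧
      (2 * cp ≤ P.mCost R j ∨ j = R.card ∨ 10 * cp < P.mCost R (j + 1)) := by
  classical
  have hn : 1 ≤ R.card := Finset.card_pos.mpr hR
  set n := R.card with hns
  set h := (n + 1) / 2 with hhs
  have hhn : h ≤ n := by omega
  by_cases hA : 2 * cp ≤ P.mCost R h
  · exact ⟨h, le_rfl, hhn, Or.inr rfl, Or.inl hA⟩
  by_cases hB : ∃ k, h ≤ k ∧ k ≤ n ∧ 2 * cp ≤ P.mCost R k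
  · set j₀ := Nat.find hB with hj₀s
    obtain ⟨hj₀1, hj₀2, hj₀3⟩ := Nat.find_spec hB
    have hj₀h : h < j₀ := by
      rcases lt_or_eq_of_le hj₀1 with hlt | heq
      · exact hlt
      · exact absurd (heq ▸ hj₀3) hA
    have hmin : ¬ (h ≤ j₀ - 1 ∧ j₀ - 1 ≤ n ∧ 2 * cp ≤ P.mCost R (j₀ - 1)) :=
      Nat.find_min hB (by omega)
    have hsmall : P.mCost R (j₀ - 1) < 2 * cp := by
      by_contra hc
      exact hmin ⟨by omega, by omega, le_of_not_gt hc⟩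
    by_cases hC : P.mCost R j₀ ≤ 10 * cp
    · exact ⟨j₀, by omega, hj₀2, Or.inl hC, Or.inl hj₀3⟩
    · refine ⟨j₀ - 1, by omega, by omega, Or.inl (by linarith), Or.inr (Or.inr ?_)⟩
      have : j₀ - 1 + 1 = j₀ := by omega
      rw [this]
      linarith [lt_of_not_ge hC]
  · push_neg at hB
    have : P.mCost R n < 2 * cp := hB n hhn le_rfl
    exact ⟨n, hhn, le_rfl, Or.inl (by linarith), Or.inr (Or.inl rfl)⟩
lemma half_le_cast {n j : ℕ} (h : (n + 1) / 2 ≤ j) : (n : ℝ) / 2 ≤ (j : ℝ) := by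
  have h2 : n ≤ 2 * j := by omega
  have := (Nat.cast_le (α := ℝ)).mpr h2
  push_cast at this
  linarith

lemma resSet_zero (R : Finset X) (Xs : ℕ → Finset X) : resSet R Xs 0 = R := by
  simp [resSet]

lemma CoveringProblem.rec_main (P : CoveringProblem X S) (g : ℝ) (hg : 1 ≤ g) :
    ∀ n : ℕ, ∀ R : Finset X, R.card ≤ n → R.Nonempty → ∀ cp : ℝ, 0 ≤ cp →
    ∃ (r : ℕ) (Xs : ℕ → Finset X) (Ts : ℕ → Finset S) (c : ℕ → ℝ),
      c 0 = cp ∧ (∀ i, 1 ≤ i → c i = P.setCost (Ts i)) ∧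
      1 ≤ r ∧
      (∀ i, 1 ≤ i → i ≤ r → (Xs i).Nonempty) ∧
      (∀ i j, 1 ≤ i → i < j → j ≤ r → Disjoint (Xs i) (Xs j)) ∧
      (Finset.Icc 1 r).biUnion Xs = R ∧
      (∀ i, 1 ≤ i → i ≤ r → P.Feas (Xs i) (Ts i)) ∧
      (∀ i, 1 ≤ i → i ≤ r → ((resSet R Xs (i - 1)).card : ℝ) / 2 ≤ ((Xs i).card : ℝ)) ∧
      (∀ i, 1 ≤ i → i + 1 ≤ r → c i < 2 * c (i - 1) → 8 * c (i - 1) < c (i + 1)) ∧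
      (∀ i, 1 ≤ i → i ≤ r → c i ≤ 10 * c (i - 1) ∨
        P.setCost (Ts i) ≤ g * P.mCost (resSet R Xs (i - 1))
          (((resSet R Xs (i - 1)).card + 1) / 2)) ∧
      (∀ i, 1 ≤ i → i ≤ r →
        P.setCost (Ts i) ≤ g * P.mCost (resSet R Xs (i - 1)) (Xs i).card) ∧
      P.mCost R ((R.card + 1) / 2) ≤ P.setCost (Ts 1) := by
  intro n
  induction n with
  | zero =>
      intro R hcard hR cp hcp
      exact absurd (Finset.card_pos.mpr hR) (by omega)
  | succ n IH =>
      intro R hcard hR cp hcp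
      classical
      have hn1 : 1 ≤ R.card := Finset.card_pos.mpr hR
      obtain ⟨j, hj1, hj2, hjC, hjB⟩ := P.chooser hR hcp
      obtain ⟨A, hAR, hAj, hAm⟩ := P.mCost_attained hj2
      obtain ⟨T, hTf, hTc⟩ := P.optCost_attained A
      have hcost : P.setCost T = P.mCost R j := hTc.trans hAm
      have hj0 : 1 ≤ j := by omega
      have hAne : A.Nonempty := Finset.card_pos.mp (by omega)
      by_cases hAeq : A = R
      · -- single phase
        refine ⟨1, fun _ => A, fun _ => T,
          fun i => if i = 0 then cp else P.setCost T, by simp, ?_, le_rfl,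
          fun _ _ _ => hAne, ?_, ?_, fun _ _ _ => hTf, ?_, ?_, ?_, ?_, ?_⟩
        · intro i hi; simp [Nat.one_le_iff_ne_zero.mp hi]
        · intro i j' hi hij hj'; omega
        · simp [hAeq]
        · intro i hi hir
          have : i = 1 := by omega
          subst this
          simp only [Nat.sub_self, resSet_zero]
          exact half_le_cast (by omega : (R.card + 1) / 2 ≤ A.card)
        · intro i hi hir; omega
        · intro i hi hir
          have : i = 1 := by omega
          subst this
          rcases hjC with hc | hc
          · left; simpa [hcost] using hc
          · right
            simp only [Nat.sub_self, resSet_zero]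
            rw [hcost, ← hc]
            exact le_mul_of_one_le_left (P.mCost_nonneg R j) hg
        · intro i hi hir
          have : i = 1 := by omega
          subst this
          simp only [Nat.sub_self, resSet_zero]
          rw [hcost, ← hAj]
          exact le_mul_of_one_le_left (P.mCost_nonneg R A.card) hg
        · rw [hcost]; exact P.mCost_mono hj1 hj2
      · -- at least two phases
        have hjn : j < R.card := by
          rcases lt_or_eq_of_le hj2 with h | h
          · exact h
          · exact absurd (Finset.eq_of_subset_of_card_le hAR (by omega)) hAeq
        have hR'card : (R \ A).card = R.card - j := by
          rw [Finset.card_sdiff_of_subset hAR, hAj]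
        have hR'ne : (R \ A).Nonempty := Finset.card_pos.mp (by omega)
        have hR'le : (R \ A).card ≤ n := by omega
        have hc1 : 0 ≤ P.setCost T := P.setCost_nonneg T
        obtain ⟨r', Xs', Ts', c', hc'0, hc'eq, hr', hNe', hDis', hUn', hFe', hA', hB',
          hC', hD', hP4'⟩ := IH (R \ A) hR'le hR'ne (P.setCost T) hc1
        set XX : ℕ → Finset X := fun k => if k = 1 then A else Xs' (k - 1) with hXXs
        set TT : ℕ → Finset S := fun k => if k = 1 then T else Ts' (k - 1) with hTTs
        set cc : ℕ → ℝ := fun k => if k = 0 then cp else c' (k - 1) with hccs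
        have hXX1 : XX 1 = A := by simp [hXXs]
        have hXXk : ∀ k, k ≠ 1 → XX k = Xs' (k - 1) := by
          intro k hk; simp [hXXs, hk]
        have hTT1 : TT 1 = T := by simp [hTTs]
        have hTTk : ∀ k, k ≠ 1 → TT k = Ts' (k - 1) := by
          intro k hk; simp [hTTs, hk]
        have hcc0 : cc 0 = cp := by simp [hccs]
        have hcck : ∀ k, k ≠ 0 → cc k = c' (k - 1) := by
          intro k hk; simp [hccs, hk]
        have hsub' : ∀ k, 1 ≤ k → k ≤ r' → Xs' k ⊆ R \ A := by
          intro k h1 h2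
          rw [← hUn']
          exact Finset.subset_biUnion_of_mem Xs' (Finset.mem_Icc.mpr ⟨h1, h2⟩)
        have hkey : ∀ i, 1 ≤ i →
            (Finset.Icc 1 i).biUnion XX = A ∪ (Finset.Icc 1 (i - 1)).biUnion Xs' := by
          intro i hi
          ext x
          simp only [Finset.mem_biUnion, Finset.mem_Icc, Finset.mem_union]
          constructor
          · rintro ⟨k, ⟨hk1, hk2⟩, hx⟩
            by_cases hk : k = 1
            · left; rw [hk, hXX1] at hx; exact hx
            · right; exact ⟨k - 1, ⟨by omega, by omega⟩, by rwa [hXXk k hk] at hx⟩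
          · rintro (hx | ⟨k, ⟨hk1, hk2⟩, hx⟩)
            · exact ⟨1, ⟨le_rfl, hi⟩, by rwa [hXX1]⟩
            · refine ⟨k + 1, ⟨by omega, by omega⟩, ?_⟩
              rw [hXXk (k + 1) (by omega)]
              simpa using hx
        have hres : ∀ i, 1 ≤ i → resSet R XX i = resSet (R \ A) Xs' (i - 1) := by
          intro i hi
          rw [resSet, resSet, hkey i hi]
          exact (sdiff_sdiff R A ((Finset.Icc 1 (i - 1)).biUnion Xs')).symm
        refine ⟨r' + 1, XX, TT, cc, hcc0, ?_, by omega, ?_, ?_, ?_, ?_, ?_, ?_, ?_, ?_, ?_⟩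
        · -- cc agrees with costs
          intro i hi
          by_cases h1 : i = 1
          · subst h1
            rw [hcck 1 (by omega), hTT1, hc'0]
          · rw [hcck i (by omega), hTTk i h1, hc'eq (i - 1) (by omega)]
        · -- nonempty
          intro i h1 h2
          by_cases hi1 : i = 1
          · subst hi1; rw [hXX1]; exact hAne
          · rw [hXXk i hi1]; exact hNe' (i - 1) (by omega) (by omega)
        · -- disjoint
          intro i j' h1 hij hj'
          by_cases hi1 : i = 1
          · subst hi1
            rw [hXX1, hXXk j' (by omega)]
            exact Finset.disjoint_sdiff.mono_right (hsub' (j' - 1) (by omega) (by omega))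
          · rw [hXXk i hi1, hXXk j' (by omega)]
            exact hDis' (i - 1) (j' - 1) (by omega) (by omega) (by omega)
        · -- union
          rw [hkey (r' + 1) (by omega)]
          simp only [Nat.add_sub_cancel]
          rw [hUn']
          exact Finset.union_sdiff_of_subset hAR
        · -- Feas
          intro i h1 h2
          by_cases hi1 : i = 1
          · subst hi1; rw [hXX1, hTT1]; exact hTf
          · rw [hXXk i hi1, hTTk i hi1]
            exact hFe' (i - 1) (by omega) (by omega)
        · -- size clause (A)
          intro i h1 h2
          by_cases hi1 : i = 1
          · subst hi1
            simp only [Nat.sub_self, resSet_zero, hXX1]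
            exact half_le_cast (by omega : (R.card + 1) / 2 ≤ A.card)
          · rw [hres (i - 1) (by omega), hXXk i hi1]
            exact hA' (i - 1) (by omega) (by omega)
        · -- doubling clause (B)
          intro i h1 h2 hyp
          by_cases hi1 : i = 1
          · subst hi1
            rw [hcc0, hcck 1 (by omega), hc'0] at hyp
            -- hyp : P.setCost T < 2 * cp
            rw [hcc0, hcck 2 (by omega)]
            have hc2 : c' 1 = P.setCost (Ts' 1) := hc'eq 1 le_rfl
            rcases hjB with hb | hb | hb
            · rw [← hcost] at hb; linarith
            · omega
            · -- 10 * cp < mCost R (j+1); derive 8*cp < mCost (R\A) h'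
              have hh'le : ((R \ A).card + 1) / 2 ≤ (R \ A).card := by omega
              obtain ⟨A'', hA''R', hA''c, hA''m⟩ := P.mCost_attained hh'le
              have hdisj : Disjoint A'' A :=
                Finset.sdiff_disjoint.mono_left hA''R'
              have hQsub : A'' ∪ A ⊆ R :=
                Finset.union_subset (hA''R'.trans (Finset.sdiff_subset)) hAR
              have hQcard : (A'' ∪ A).card = ((R \ A).card + 1) / 2 + j := by
                rw [Finset.card_union_of_disjoint hdisj, hA''c, hAj]
              have s1 : P.mCost R (j + 1) ≤ P.mCost R ((A'' ∪ A).card) := by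
                apply P.mCost_mono _ (Finset.card_le_card hQsub)
                rw [hQcard]; omega
              have s2 : P.mCost R ((A'' ∪ A).card) ≤ P.optCost (A'' ∪ A) :=
                P.mCost_le hQsub
              have s3 : P.optCost (A'' ∪ A) ≤ P.optCost A'' + P.optCost A :=
                P.optCost_union_le _ _
              have s6 : P.mCost (R \ A) (((R \ A).card + 1) / 2) ≤ P.setCost (Ts' 1) :=
                hP4'
              rw [hc2]
              rw [hA''m] at s3
              rw [← hTc] at s3
              linarith
          · have d1 : cc i = c' (i - 1) := hcck i (by omega)
            have d2 : cc (i - 1) = c' (i - 1 - 1) := by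
              rw [hcck (i - 1) (by omega)]
            have d3 : cc (i + 1) = c' (i - 1 + 1) := by
              rw [hcck (i + 1) (by omega)]
              congr 1
              omega
            have := hB' (i - 1) (by omega) (by omega) (by rw [← d1, ← d2]; exact hyp)
            rw [d2, d3]
            exact this
        · -- cost clause (C)
          intro i h1 h2
          by_cases hi1 : i = 1
          · subst hi1
            rcases hjC with hc | hc
            · left
              rw [hcc0, hcck 1 (by omega), hc'0, hcost]
              exact hc
            · right
              rw [hTT1]
              simp only [Nat.sub_self, resSet_zero]
              rw [hcost, ← hc]
              exact le_mul_of_one_le_left (P.mCost_nonneg R j) hg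
          · have d1 : cc i = c' (i - 1) := hcck i (by omega)
            have d2 : cc (i - 1) = c' (i - 1 - 1) := by
              rw [hcck (i - 1) (by omega)]
            rcases hC' (i - 1) (by omega) (by omega) with hc | hc
            · left; rw [d1, d2]; exact hc
            · right
              rw [hres (i - 1) (by omega), hTTk i hi1]
              exact hc
        · -- cost clause (D)
          intro i h1 h2
          by_cases hi1 : i = 1
          · subst hi1
            rw [hTT1, hXX1]
            simp only [Nat.sub_self, resSet_zero]
            rw [hcost, ← hAj]
            exact le_mul_of_one_le_left (P.mCost_nonneg R A.card) hg
          · rw [hres (i - 1) (by omega), hTTk i hi1, hXXk i hi1]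
            exact hD' (i - 1) (by omega) (by omega)
        · -- P4
          rw [hTT1, hcost]
          exact P.mCost_mono hj1 hj2
lemma one_le_gFun {α γ : ℝ} (hα : 1 ≤ α) (hγ : 1 ≤ γ) {t : ℕ} (ht : 1 ≤ t) :
    1 ≤ gFun α γ t := by
  rw [gFun]
  split
  · exact hα
  · rename_i hne
    have hγ1 : 1 < γ := lt_of_le_of_ne hγ (Ne.symm hne)
    have hlogt : 0 ≤ Real.log t := Real.log_nonneg (by exact_mod_cast ht)
    have hpos : 0 < Real.log (γ / (γ - 1)) :=
      Real.log_pos ((one_lt_div (by linarith)).mpr (by linarith))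
    have hx : 0 ≤ Real.log t / Real.log (γ / (γ - 1)) := div_nonneg hlogt hpos.le
    exact le_trans hα (le_mul_of_one_le_right (by linarith) (by linarith))
theorem stmt2 :
    ∀ (X S : Type) [DecidableEq X] [Fintype S] [DecidableEq S]
      (P : CoveringProblem X S) (α γ : ℝ), 1 ≤ α → 1 ≤ γ → P.Decomposable α γ →
      ∀ Xhat : Finset X, Xhat.Nonempty →
        ∃ (r : ℕ) (Xs : ℕ → Finset X) (Ts : ℕ → Finset S),
          1 ≤ r ∧
          (∀ i, 1 ≤ i → i ≤ r → (Xs i).Nonempty) ∧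
          (∀ i j, 1 ≤ i → i < j → j ≤ r → Disjoint (Xs i) (Xs j)) ∧
          (Finset.Icc 1 r).biUnion Xs = Xhat ∧
          (∀ i, 1 ≤ i → i ≤ r → P.Feas (Xs i) (Ts i)) ∧
          -- (A)
          (∀ i, 1 ≤ i → i ≤ r →
            ((resSet Xhat Xs (i - 1)).card : ℝ) / 2 ≤ ((Xs i).card : ℝ)) ∧
          -- (B)
          (∀ i, 2 ≤ i → i ≤ r - 1 →
            P.setCost (Ts i) < 2 * P.setCost (Ts (i - 1)) →
            8 * P.setCost (Ts (i - 1)) < P.setCost (Ts (i + 1))) ∧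
          -- (C)
          (∀ i, 2 ≤ i → i ≤ r →
            P.setCost (Ts i) > 10 * P.setCost (Ts (i - 1)) →
            P.setCost (Ts i) ≤ gFun α γ Xhat.card *
              P.mCost (resSet Xhat Xs (i - 1))
                (((resSet Xhat Xs (i - 1)).card + 1) / 2)) ∧
          -- (D)
          (∀ i, 2 ≤ i → i ≤ r →
            P.setCost (Ts i) ≤ gFun α γ Xhat.card *
              P.mCost (resSet Xhat Xs (i - 1)) (Xs i).card) ∧
          P.setCost (Ts 1) ≤ gFun α γ Xhat.card * P.mCost Xhat ((Xhat.card + 1) / 2) := by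

  intro X S _ _ _ P α γ hα hγ _ Xhat hne
  classical
  have ht : 1 ≤ Xhat.card := Finset.card_pos.mpr hne
  have hg : 1 ≤ gFun α γ Xhat.card := one_le_gFun hα hγ ht
  obtain ⟨r, Xs, Ts, c, hc0, hceq, hr, hNe, hDis, hUn, hFe, hA, hB, hC, hD, _⟩ :=
    P.rec_main (gFun α γ Xhat.card) hg Xhat.card Xhat le_rfl hne 0 le_rfl
  refine ⟨r, Xs, Ts, hr, hNe, hDis, hUn, hFe, hA, ?_, ?_, ?_, ?_⟩
  · -- (B)
    intro i h2 hir hyp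
    have e1 := hceq i (by omega)
    have e2 := hceq (i - 1) (by omega)
    have e3 := hceq (i + 1) (by omega)
    have := hB i (by omega) (by omega) (by rw [e1, e2]; exact hyp)
    rw [e2, e3] at this
    exact this
  · -- (C)
    intro i h2 hir hyp
    rcases hC i (by omega) hir with hc | hc
    · rw [hceq i (by omega), hceq (i - 1) (by omega)] at hc
      linarith [hyp]
    · exact hc
  · -- (D)
    intro i h2 hir
    exact hD i (by omega) hir
  · -- phase 1 bound
    rcases hC 1 le_rfl hr with hc | hc
    · rw [hceq 1 le_rfl, hc0] at hc
      have h0 : 0 ≤ P.setCost (Ts 1) := P.setCost_nonneg (Ts 1)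
      have hm : 0 ≤ P.mCost Xhat ((Xhat.card + 1) / 2) := P.mCost_nonneg _ _
      nlinarith
    · rw [show (1 : ℕ) - 1 = 0 from rfl, resSet_zero] at hc
      exact hc
end

section
/- Let n ≥ 4 and let c_1, …, c_n be nonnegative real numbers such that for every index i with 2 ≤ i ≤ n−1, if c_i < 2·c_{i−1} then c_{i+1} > 8·c_{i−1}. Then for every j with 1 ≤ j ≤ n−3, c_j + c_{j+1} ≤ (3/4)·(c_{j+2} + c_{j+3}). -/
theorem stmt5 (n : ℕ) (c : ℕ → ℝ) (hn : 4 ≤ n)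
    (hpos : ∀ i, 1 ≤ i → i ≤ n → 0 ≤ c i)
    (hB : ∀ i, 2 ≤ i → i ≤ n - 1 → c i < 2 * c (i - 1) → 8 * c (i - 1) < c (i + 1)) :
    ∀ j, 1 ≤ j → j ≤ n - 3 → c j + c (j + 1) ≤ (3 / 4) * (c (j + 2) + c (j + 3)) := by
  intro j hj1 hj2
  have h0 : 0 ≤ c j := hpos j hj1 (by omega)
  have h1 : 0 ≤ c (j + 1) := hpos (j + 1) (by omega) (by omega)
  have h2 : 0 ≤ c (j + 2) := hpos (j + 2) (by omega) (by omega)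
  have h3 : 0 ≤ c (j + 3) := hpos (j + 3) (by omega) (by omega)
  by_cases hA : c (j + 1) < 2 * c j
  · have hb := hB (j + 1) (by omega) (by omega) (by simpa using hA)
    simp only [Nat.add_sub_cancel] at hb
    have : (j + 1 + 1) = j + 2 := by ring
    rw [this] at hb
    nlinarith
  · push_neg at hA
    by_cases hC : c (j + 2) < 2 * c (j + 1)
    · have hb := hB (j + 2) (by omega) (by omega) (by simpa using hC)
      have e : (j + 2 - 1) = j + 1 := by omega
      rw [e] at hb
      have : (j + 2 + 1) = j + 3 := by ring
      rw [this] at hb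
      nlinarith
    · push_neg at hC
      nlinarith
end
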